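/- Replay theorem: if a combined-machine configuration c is reachable from the initial configuration (u, halt_∅, ∅, ∅, ∅)_u, then the replay configuration of c, defined as (u, halt_∅, P·F, s, R)_u where c = (t, K_P, F, s, R)_u, reduces to c using only pure steps. -/

import Mathlib

/-- Terms: variables, numerals, successor, let-bindings, and binary choice. -/
inductive Tm : Type
  | var : String → Tm
  | num : ℕ → Tm
  | suc : Tm → Tm
  | lett : String → Tm → Tm → Tm
  | choose : Tm → Tm → Tm
deriving DecidableEq

/-- Substitution of a numeral for a variable. -/
def Tm.subst (x : String) (n : ℕ) : Tm → Tm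
  | .var y => if y = x then .num n else .var y
  | .num m => .num m
  | .suc t => .suc (t.subst x n)
  | .lett y t u => .lett y (t.subst x n) (if y = x then u else u.subst x n)
  | .choose a b => .choose (a.subst x n) (b.subst x n)

/-- Machine continuations: halt, successor frame, and let frame. -/
inductive Kont : Type
  | halt : Kont
  | suc : Kont → Kont
  | lett : String → Tm → Kont → Kont
deriving DecidableEq

/-- A choice `i ∈ {1, 2}` is encoded as a `Bool`: `false` is choice 1, `true` is choice 2.
A history is a list of choices; `P·i` is `P ++ [i]`. -/
abbrev Hist : Type := List Bool

/-- Successor on reversed histories: `next(P·1) = P·2`, `next(P·2) = next(P)`. -/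
def nextRev : List Bool → Option (List Bool)
  | [] => none
  | false :: P => some (true :: P)
  | true :: P => nextRev P

/-- The successor function `next` on histories (`none` when undefined). -/
def nextHist (P : Hist) : Option Hist := (nextRev P.reverse).map List.reverse

/-- Combined-machine configurations `(t, K_P, F, s, R)_u`: the current continuation
carries a past history `P`, each soup entry carries its own past history, and the
machine holds a future `F`. -/
structure MCfg : Type where
  tm : Tm
  k : Kont
  past : Hist
  fut : Hist
  soup : List (ℕ × Kont × Hist)
  res : List ℕ
deriving DecidableEq

/-- The reduction relation of the combined machine, for a fixed initial term `u`. -/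
inductive MStep (u : Tm) : MCfg → MCfg → Prop
  | suc (t K P F s R) : MStep u ⟨.suc t, K, P, F, s, R⟩ ⟨t, .suc K, P, F, s, R⟩
  | sucNum (n K P F s R) : MStep u ⟨.num n, .suc K, P, F, s, R⟩ ⟨.num (n + 1), K, P, F, s, R⟩
  | lett (x t t' K P F s R) :
      MStep u ⟨.lett x t t', K, P, F, s, R⟩ ⟨t, .lett x t' K, P, F, s, R⟩
  | lettNum (n x t' K P F s R) :
      MStep u ⟨.num n, .lett x t' K, P, F, s, R⟩ ⟨t'.subst x n, K, P, F, s, R⟩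
  | chooseFork (n₁ n₂ K P s R) :
      MStep u ⟨.choose (.num n₁) (.num n₂), K, P, [], s, R⟩
              ⟨.num n₁, K, P ++ [false], [], (n₂, K, P ++ [true]) :: s, R⟩
  | haltPop (n n' K' P P' s R) :
      MStep u ⟨.num n, .halt, P, [], (n', K', P') :: s, R⟩
              ⟨.num n', K', P', [], s, n :: R⟩
  | chooseFut (n₁ n₂ K P i F s R) :
      MStep u ⟨.choose (.num n₁) (.num n₂), K, P, i :: F, s, R⟩
              ⟨.num (if i then n₂ else n₁), K, P ++ [i], F, s, R⟩

/-- Pure reductions: the subset of combined-machine reductions that do not depend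
on the soup or result components (the four successor/let rules, plus the
future-consuming choose rule). -/
inductive PureStep (u : Tm) : MCfg → MCfg → Prop
  | suc (t K P F s R) : PureStep u ⟨.suc t, K, P, F, s, R⟩ ⟨t, .suc K, P, F, s, R⟩
  | sucNum (n K P F s R) :
      PureStep u ⟨.num n, .suc K, P, F, s, R⟩ ⟨.num (n + 1), K, P, F, s, R⟩
  | lett (x t t' K P F s R) :
      PureStep u ⟨.lett x t t', K, P, F, s, R⟩ ⟨t, .lett x t' K, P, F, s, R⟩
  | lettNum (n x t' K P F s R) :
      PureStep u ⟨.num n, .lett x t' K, P, F, s, R⟩ ⟨t'.subst x n, K, P, F, s, R⟩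
  | chooseFut (n₁ n₂ K P i F s R) :
      PureStep u ⟨.choose (.num n₁) (.num n₂), K, P, i :: F, s, R⟩
              ⟨.num (if i then n₂ else n₁), K, P ++ [i], F, s, R⟩

/-- The initial combined configuration `(u, halt_∅, ∅, ∅, ∅)_u`. -/
def initMCfg (u : Tm) : MCfg := ⟨u, .halt, [], [], [], []⟩

/-- Reachability of a combined configuration from the initial configuration. -/
def MReachable (u : Tm) (c : MCfg) : Prop :=
  Relation.ReflTransGen (MStep u) (initMCfg u) c

/-- The replay configuration: restart the initial term `u` with empty past,
future `P·F`, and the same soup and results. -/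
def MCfg.replay (u : Tm) (c : MCfg) : MCfg :=
  ⟨u, .halt, [], c.past ++ c.fut, c.soup, c.res⟩

/-! A thread `(t, K_P)` is replayable when pure steps lead from `(u, halt_∅, P·F, s, R)` to
`(t, K_P, F, s, R)` for every future `F`, soup `s` and results `R`. Because `F` is arbitrary,
both branches of a fork are reached by the pure future-consuming choose step, from the futures
`1·F` and `2·F`; every other machine step either extends such a pure run or resumes a soup
thread. Hence all threads of a reachable configuration are replayable, and the theorem is this
fact for the running thread. -/

def Replayable (u t : Tm) (K : Kont) (P : Hist) : Prop :=
  ∀ F s R, Relation.ReflTransGen (PureStep u) ⟨u, .halt, [], P ++ F, s, R⟩ ⟨t, K, P, F, s, R⟩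

namespace Replayable

variable {u t t' : Tm} {K K' : Kont} {P : Hist}

theorem init (u : Tm) : Replayable u u .halt [] := fun _ _ _ => .refl

theorem of_pureStep (h : Replayable u t K P)
    (hstep : ∀ F s R, PureStep u ⟨t, K, P, F, s, R⟩ ⟨t', K', P, F, s, R⟩) :
    Replayable u t' K' P :=
  fun F s R => (h F s R).tail (hstep F s R)

theorem choose {n₁ n₂ : ℕ} (h : Replayable u (.choose (.num n₁) (.num n₂)) K P) (i : Bool) :
    Replayable u (.num (if i then n₂ else n₁)) K (P ++ [i]) := fun F s R => by
  simpa using (h (i :: F) s R).tail (PureStep.chooseFut n₁ n₂ K P i F s R)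

end Replayable

def MCfg.AllReplayable (u : Tm) (c : MCfg) : Prop :=
  Replayable u c.tm c.k c.past ∧ ∀ e ∈ c.soup, Replayable u (.num e.1) e.2.1 e.2.2

theorem MCfg.AllReplayable.of_mStep {u : Tm} {c c' : MCfg} (hc : c.AllReplayable u)
    (h : MStep u c c') : c'.AllReplayable u := by
  obtain ⟨hrun, hsoup⟩ := hc
  cases h with
  | suc => exact ⟨hrun.of_pureStep fun _ _ _ => .suc .., hsoup⟩
  | sucNum => exact ⟨hrun.of_pureStep fun _ _ _ => .sucNum .., hsoup⟩
  | lett => exact ⟨hrun.of_pureStep fun _ _ _ => .lett .., hsoup⟩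
  | lettNum => exact ⟨hrun.of_pureStep fun _ _ _ => .lettNum .., hsoup⟩
  | chooseFut => exact ⟨hrun.choose _, hsoup⟩
  | chooseFork =>
    refine ⟨hrun.choose false, ?_⟩
    rintro e (_ | ⟨_, he⟩)
    exacts [hrun.choose true, hsoup e he]
  | haltPop => exact ⟨hsoup _ List.mem_cons_self, fun e he => hsoup e (.tail _ he)⟩

theorem MReachable.allReplayable {u : Tm} {c : MCfg} (hc : MReachable u c) :
    c.AllReplayable u := by
  induction hc with
  | refl => exact ⟨Replayable.init u, by simp [initMCfg]⟩
  | tail _ h ih => exact ih.of_mStep h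

/-- Replay theorem: any combined configuration reachable from the initial
configuration is reachable from its replay configuration using only pure steps. -/
theorem replay_theorem (u : Tm) (c : MCfg) (hc : MReachable u c) :
    Relation.ReflTransGen (PureStep u) (c.replay u) c :=
  hc.allReplayable.1 c.fut c.soup c.res
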